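/- arXiv:math/0612693 — 6 statements merged into one kernel-verified Lean document; each statement's English description precedes it below -/
import Mathlib

section
/- For each positive integer k and λ = 1/(k²π²), the function y(t) = cos(kπt) satisfies, for all t ∈ [0,1], the integral equation λ·y(t) = ∫_0^t s·y(s) ds + t·∫_t^1 y(s) ds + (t²/2 - t)·∫_0^1 y(s) ds + ∫_0^1 (s²/2 - s + 1/3)·y(s) ds. -/
open Real intervalIntegral Set

lemma hasDerivAt_sin_mul (a s : ℝ) :
    HasDerivAt (fun x => Real.sin (a * x)) (a * Real.cos (a * s)) s := by
  have h := (Real.hasDerivAt_sin (a * s)).comp s ((hasDerivAt_id s).const_mul a)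
  convert h using 1
  · rfl
  · rfl
  · rfl
  ring

lemma hasDerivAt_cos_mul (a s : ℝ) :
    HasDerivAt (fun x => Real.cos (a * x)) (-(a * Real.sin (a * s))) s := by
  have h := (Real.hasDerivAt_cos (a * s)).comp s ((hasDerivAt_id s).const_mul a)
  convert h using 1
  · rfl
  · rfl
  · rfl
  ring

lemma integral_cos_mul (a : ℝ) (ha : a ≠ 0) (u v : ℝ) :
    (∫ s in u..v, Real.cos (a * s)) = Real.sin (a * v) / a - Real.sin (a * u) / a := by
  have hd : ∀ s ∈ Set.uIcc u v,
      HasDerivAt (fun x => Real.sin (a * x) / a) (Real.cos (a * s)) s := by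
    intro s _
    have := (hasDerivAt_sin_mul a s).div_const a
    simpa [mul_div_assoc, mul_div_cancel_left₀ _ ha] using this
  rw [intervalIntegral.integral_eq_sub_of_hasDerivAt hd
    (by apply Continuous.intervalIntegrable; continuity)]

lemma integral_id_mul_cos (a : ℝ) (ha : a ≠ 0) (t : ℝ) :
    (∫ s in (0:ℝ)..t, s * Real.cos (a * s))
      = t * Real.sin (a * t) / a + Real.cos (a * t) / a ^ 2 - 1 / a ^ 2 := by
  have hd : ∀ s ∈ Set.uIcc (0:ℝ) t,
      HasDerivAt (fun x => x * Real.sin (a * x) / a + Real.cos (a * x) / a ^ 2)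
        (s * Real.cos (a * s)) s := by
    intro s _
    have h1 : HasDerivAt (fun x => x * Real.sin (a * x) / a)
        ((Real.sin (a * s) + s * (a * Real.cos (a * s))) / a) s := by
      simpa using ((hasDerivAt_id s).mul (hasDerivAt_sin_mul a s)).div_const a
    have h2 := (hasDerivAt_cos_mul a s).div_const (a ^ 2)
    have h := h1.add h2
    convert h using 1
    · rfl
    · rfl
    · rfl
    field_simp
    ring
  rw [intervalIntegral.integral_eq_sub_of_hasDerivAt hd
    (by apply Continuous.intervalIntegrable; continuity)]
  simp

lemma integral_poly_mul_cos (a : ℝ) (ha : a ≠ 0) :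
    (∫ s in (0:ℝ)..1, (s ^ 2 / 2 - s + 1 / 3) * Real.cos (a * s))
      = (-(1:ℝ)/6) * Real.sin a / a - Real.sin a / a ^ 3 + 1 / a ^ 2 := by
  have hd : ∀ s ∈ Set.uIcc (0:ℝ) 1,
      HasDerivAt (fun x => (x ^ 2 / 2 - x + 1 / 3) * Real.sin (a * x) / a
          + (x - 1) * Real.cos (a * x) / a ^ 2 - Real.sin (a * x) / a ^ 3)
        ((s ^ 2 / 2 - s + 1 / 3) * Real.cos (a * s)) s := by
    intro s _
    have hp : HasDerivAt (fun x : ℝ => x ^ 2 / 2 - x + 1 / 3) (s - 1) s := by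
      have h := (((hasDerivAt_pow 2 s).div_const 2).sub (hasDerivAt_id s)).add_const (1/3 : ℝ)
      convert h using 1
      · rfl
      · rfl
      · rfl
      norm_num
    have h1 := (hp.mul (hasDerivAt_sin_mul a s)).div_const a
    have hq : HasDerivAt (fun x : ℝ => x - 1) 1 s := (hasDerivAt_id s).sub_const 1
    have h2 := (hq.mul (hasDerivAt_cos_mul a s)).div_const (a ^ 2)
    have h3 := (hasDerivAt_sin_mul a s).div_const (a ^ 3)
    have h := (h1.add h2).sub h3
    convert h using 1
    · rfl
    · rfl
    · rfl
    field_simp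
    ring
  rw [intervalIntegral.integral_eq_sub_of_hasDerivAt hd
    (by apply Continuous.intervalIntegrable; continuity)]
  simp
  field_simp
  ring

theorem stmt_4 (k : ℕ) (hk : 1 ≤ k) (lam : ℝ) (hlam : lam = 1 / (k ^ 2 * π ^ 2)) :
    ∀ t ∈ Icc (0:ℝ) 1,
      lam * Real.cos (k * π * t)
        = (∫ s in (0:ℝ)..t, s * Real.cos (k * π * s))
          + t * (∫ s in t..(1:ℝ), Real.cos (k * π * s))
          + (t ^ 2 / 2 - t) * (∫ s in (0:ℝ)..1, Real.cos (k * π * s))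
          + ∫ s in (0:ℝ)..1, (s ^ 2 / 2 - s + 1 / 3) * Real.cos (k * π * s) := by
  intro t ht
  set a : ℝ := (k : ℝ) * π with ha_def
  have hk0 : (k : ℝ) ≠ 0 := Nat.cast_ne_zero.mpr (by omega)
  have ha : a ≠ 0 := mul_ne_zero hk0 Real.pi_ne_zero
  have hsin : Real.sin a = 0 := Real.sin_nat_mul_pi k
  rw [integral_id_mul_cos a ha t, integral_cos_mul a ha t 1,
    integral_cos_mul a ha 0 1, integral_poly_mul_cos a ha]
  rw [mul_one, mul_zero, Real.sin_zero, hsin, hlam]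
  have : ((k : ℝ) ^ 2 * π ^ 2) = a ^ 2 := by rw [ha_def]; ring
  rw [this]
  field_simp
  ring
end

section
/- Let K(s,t) = min(s,t) - s - t + s²/2 + t²/2 + 1/3 on [0,1]², let λ > 0 and let y : [0,1] → ℝ be continuous with λ·y(t) = ∫_0^1 K(s,t)·y(s) ds for all t ∈ [0,1]. Then y is continuously differentiable on [0,1] and λ·y'(t) = (t-1)·∫_0^1 y(s) ds + ∫_t^1 y(s) ds for all t ∈ [0,1]; in particular y'(0) = y'(1) = 0. -/
open Real intervalIntegral Set

theorem stmt_5 (K : ℝ → ℝ → ℝ)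
    (hK : ∀ s t : ℝ, K s t = min s t - s - t + s ^ 2 / 2 + t ^ 2 / 2 + 1 / 3)
    (lam : ℝ) (hlam : 0 < lam) (y : ℝ → ℝ) (hy : ContinuousOn y (Icc 0 1))
    (heig : ∀ t ∈ Icc (0:ℝ) 1, lam * y t = ∫ s in (0:ℝ)..1, K s t * y s) :
    (∀ t ∈ Icc (0:ℝ) 1,
        HasDerivWithinAt y
          (lam⁻¹ * ((t - 1) * (∫ s in (0:ℝ)..1, y s) + ∫ s in t..(1:ℝ), y s))
          (Icc 0 1) t)
      ∧ ContinuousOn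
          (fun t => lam⁻¹ * ((t - 1) * (∫ s in (0:ℝ)..1, y s) + ∫ s in t..(1:ℝ), y s))
          (Icc 0 1)
      ∧ lam⁻¹ * ((0 - 1) * (∫ s in (0:ℝ)..1, y s) + ∫ s in (0:ℝ)..1, y s) = 0
      ∧ lam⁻¹ * ((1 - 1) * (∫ s in (0:ℝ)..1, y s) + ∫ s in (1:ℝ)..1, y s) = 0 := by
  set I : ℝ := ∫ s in (0:ℝ)..1, y s with hI
  set C : ℝ := ∫ s in (0:ℝ)..1, (s ^ 2 / 2 - s + 1 / 3) * y s with hC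
  -- integrability facts
  have hyint : ∀ a b : ℝ, a ∈ Icc (0:ℝ) 1 → b ∈ Icc (0:ℝ) 1 →
      IntervalIntegrable y MeasureTheory.volume a b := by
    intro a b ha hb
    exact (hy.mono (uIcc_subset_Icc ha hb)).intervalIntegrable
  have hsy : ContinuousOn (fun s => s * y s) (Icc 0 1) :=
    (continuousOn_id.mul hy)
  have hsyint : ∀ a b : ℝ, a ∈ Icc (0:ℝ) 1 → b ∈ Icc (0:ℝ) 1 →
      IntervalIntegrable (fun s => s * y s) MeasureTheory.volume a b := by
    intro a b ha hb
    exact (hsy.mono (uIcc_subset_Icc ha hb)).intervalIntegrable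
  -- the representation of lam * y
  have key : ∀ t ∈ Icc (0:ℝ) 1,
      lam * y t = (∫ s in (0:ℝ)..t, s * y s) + t * (I - ∫ s in (0:ℝ)..t, y s)
        + (t ^ 2 / 2 - t) * I + C := by
    intro t ht
    have h01 : (0:ℝ) ∈ Icc (0:ℝ) 1 := by norm_num
    have h11 : (1:ℝ) ∈ Icc (0:ℝ) 1 := by norm_num
    have hKsplit : ∀ s : ℝ, K s t * y s
        = min s t * y s + ((t ^ 2 / 2 - t) * y s + (s ^ 2 / 2 - s + 1 / 3) * y s) := by
      intro s; rw [hK]; ring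
    have hmin : ContinuousOn (fun s => min s t * y s) (Icc 0 1) :=
      ((continuous_id.min continuous_const).continuousOn.mul hy)
    have hminint : ∀ a b : ℝ, a ∈ Icc (0:ℝ) 1 → b ∈ Icc (0:ℝ) 1 →
        IntervalIntegrable (fun s => min s t * y s) MeasureTheory.volume a b := by
      intro a b ha hb
      exact (hmin.mono (uIcc_subset_Icc ha hb)).intervalIntegrable
    have hcont2 : ContinuousOn (fun s : ℝ => (s ^ 2 / 2 - s + 1 / 3) * y s) (Icc 0 1) := by
      apply ContinuousOn.mul _ hy
      fun_prop
    have hrest : IntervalIntegrable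
        (fun s => (t ^ 2 / 2 - t) * y s + (s ^ 2 / 2 - s + 1 / 3) * y s)
        MeasureTheory.volume 0 1 := by
      apply IntervalIntegrable.add
      · exact (hyint 0 1 h01 h11).const_mul _
      · exact (hcont2.mono (uIcc_subset_Icc h01 h11)).intervalIntegrable
    rw [heig t ht]
    have e1 : (∫ s in (0:ℝ)..1, K s t * y s)
        = (∫ s in (0:ℝ)..1, min s t * y s)
          + ∫ s in (0:ℝ)..1, ((t ^ 2 / 2 - t) * y s + (s ^ 2 / 2 - s + 1 / 3) * y s) := by
      rw [← intervalIntegral.integral_add (hminint 0 1 h01 h11) hrest]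
      exact intervalIntegral.integral_congr fun s _ => hKsplit s
    have e2 : (∫ s in (0:ℝ)..1, min s t * y s)
        = (∫ s in (0:ℝ)..t, s * y s) + t * (I - ∫ s in (0:ℝ)..t, y s) := by
      have hsplit : (∫ s in (0:ℝ)..1, min s t * y s)
          = (∫ s in (0:ℝ)..t, min s t * y s) + ∫ s in t..(1:ℝ), min s t * y s := by
        rw [intervalIntegral.integral_add_adjacent_intervals (hminint 0 t h01 ht)
          (hminint t 1 ht h11)]
      have hleft : (∫ s in (0:ℝ)..t, min s t * y s) = ∫ s in (0:ℝ)..t, s * y s := by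
        apply intervalIntegral.integral_congr
        intro s hs
        rw [uIcc_of_le ht.1] at hs
        simp only
        rw [inf_eq_left.mpr hs.2]
      have hright : (∫ s in t..(1:ℝ), min s t * y s) = t * ∫ s in t..(1:ℝ), y s := by
        rw [← intervalIntegral.integral_const_mul]
        apply intervalIntegral.integral_congr
        intro s hs
        rw [uIcc_of_le ht.2] at hs
        simp only
        rw [inf_eq_right.mpr hs.1]
      have hsub : (∫ s in t..(1:ℝ), y s) = I - ∫ s in (0:ℝ)..t, y s := by
        rw [hI, eq_sub_iff_add_eq, add_comm]
        exact intervalIntegral.integral_add_adjacent_intervals (hyint 0 t h01 ht)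
          (hyint t 1 ht h11)
      rw [hsplit, hleft, hright, hsub]
    have e3 : (∫ s in (0:ℝ)..1, ((t ^ 2 / 2 - t) * y s + (s ^ 2 / 2 - s + 1 / 3) * y s))
        = (t ^ 2 / 2 - t) * I + C := by
      rw [intervalIntegral.integral_add ((hyint 0 1 h01 h11).const_mul _)
        ((hcont2.mono (uIcc_subset_Icc h01 h11)).intervalIntegrable),
        intervalIntegral.integral_const_mul]
    rw [e1, e2, e3]; ring
  -- derivative of G within Icc
  have hG : ∀ t ∈ Icc (0:ℝ) 1,
      HasDerivWithinAt (fun u => (∫ s in (0:ℝ)..u, s * y s)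
          + u * (I - ∫ s in (0:ℝ)..u, y s) + (u ^ 2 / 2 - u) * I + C)
        ((t - 1) * I + ∫ s in t..(1:ℝ), y s) (Icc 0 1) t := by
    intro t ht
    haveI : Fact (t ∈ Icc (0:ℝ) 1) := ⟨ht⟩
    have h01 : (0:ℝ) ∈ Icc (0:ℝ) 1 := by norm_num
    have h11 : (1:ℝ) ∈ Icc (0:ℝ) 1 := by norm_num
    have hmeas : MeasurableSet (Icc (0:ℝ) 1) := measurableSet_Icc
    have d1 : HasDerivWithinAt (fun u => ∫ s in (0:ℝ)..u, s * y s) (t * y t) (Icc 0 1) t :=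
      intervalIntegral.integral_hasDerivWithinAt_right (hsyint 0 t h01 ht)
        (hsy.stronglyMeasurableAtFilter_nhdsWithin hmeas t) (hsy t ht)
    have d2 : HasDerivWithinAt (fun u => ∫ s in (0:ℝ)..u, y s) (y t) (Icc 0 1) t :=
      intervalIntegral.integral_hasDerivWithinAt_right (hyint 0 t h01 ht)
        (hy.stronglyMeasurableAtFilter_nhdsWithin hmeas t) (hy t ht)
    have d3 : HasDerivWithinAt (fun u : ℝ => u * (I - ∫ s in (0:ℝ)..u, y s))
        (1 * (I - ∫ s in (0:ℝ)..t, y s) + t * (0 - y t)) (Icc 0 1) t :=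
      (hasDerivWithinAt_id t _).mul ((hasDerivWithinAt_const t _ I).sub d2)
    have d4 : HasDerivWithinAt (fun u : ℝ => (u ^ 2 / 2 - u) * I) ((t - 1) * I) (Icc 0 1) t := by
      have : HasDerivWithinAt (fun u : ℝ => u ^ 2 / 2 - u) (t - 1) (Icc 0 1) t := by
        have h := ((hasDerivWithinAt_pow (s := Icc (0:ℝ) 1) 2 t).div_const 2).sub
          (hasDerivWithinAt_id t (Icc (0:ℝ) 1))
        exact h.congr_deriv (by ring)
      exact this.mul_const I
    have hsub : (∫ s in t..(1:ℝ), y s) = I - ∫ s in (0:ℝ)..t, y s := by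
      rw [hI, eq_sub_iff_add_eq, add_comm]
      exact intervalIntegral.integral_add_adjacent_intervals (hyint 0 t h01 ht)
        (hyint t 1 ht h11)
    have := ((d1.add d3).add d4).add_const C
    apply this.congr_deriv
    rw [hsub]; ring
  have h01 : (0:ℝ) ∈ Icc (0:ℝ) 1 := by norm_num
  have h11 : (1:ℝ) ∈ Icc (0:ℝ) 1 := by norm_num
  refine ⟨?_, ?_, ?_, ?_⟩
  · intro t ht
    have hyeq : ∀ u ∈ Icc (0:ℝ) 1, y u = lam⁻¹ * ((∫ s in (0:ℝ)..u, s * y s)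
        + u * (I - ∫ s in (0:ℝ)..u, y s) + (u ^ 2 / 2 - u) * I + C) := by
      intro u hu
      rw [← key u hu, ← mul_assoc, inv_mul_cancel₀ hlam.ne', one_mul]
    exact (((hG t ht).const_mul lam⁻¹).congr hyeq (hyeq t ht))
  · apply ContinuousOn.mul continuousOn_const
    apply ContinuousOn.add (by fun_prop)
    have hprim : ContinuousOn (fun t => ∫ s in (0:ℝ)..t, y s) (Icc 0 1) := by
      have := intervalIntegral.continuousOn_primitive_interval
        (a := (0:ℝ)) (b := (1:ℝ)) (μ := MeasureTheory.volume) (f := y) ?_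
      · simpa [uIcc_of_le (by norm_num : (0:ℝ) ≤ 1)] using this
      · rw [uIcc_of_le (by norm_num : (0:ℝ) ≤ 1)]
        exact hy.integrableOn_compact isCompact_Icc
    have heq : ∀ t ∈ Icc (0:ℝ) 1, (∫ s in t..(1:ℝ), y s) = I - ∫ s in (0:ℝ)..t, y s := by
      intro t ht
      rw [hI, eq_sub_iff_add_eq, add_comm]
      exact intervalIntegral.integral_add_adjacent_intervals (hyint 0 t h01 ht)
        (hyint t 1 ht h11)
    exact (continuousOn_const.sub hprim).congr heq
  · simp
  · simp
end

section
/- Let γ > -1/2 and λ > 0, and let K_γ(s,t) = (1+2γ)^{-1}·(min(s,t)^{1+2γ} - s^{1+2γ} - t^{1+2γ} + ((1+2γ)/(2+2γ))(s^{2+2γ}+t^{2+2γ}) + 2/((2+2γ)(3+2γ))). If e : [0,1] → ℝ is continuous and satisfies λ·e(t) = ∫_0^1 K_γ(s,t)·e(s) ds for all t ∈ [0,1], then e is continuously differentiable on (0,1) and λ·e'(t) = -t^{2γ}·∫_0^t e(s) ds + t^{1+2γ}·∫_0^1 e(s) ds for all t ∈ (0,1). -/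
open Real intervalIntegral Set MeasureTheory

theorem stmt_10 (γ : ℝ) (hγ : -1/2 < γ) (lam : ℝ) (hlam : 0 < lam)
    (K : ℝ → ℝ → ℝ)
    (hK : ∀ s t : ℝ, K s t = (1 + 2*γ)⁻¹ *
      (min s t ^ (1 + 2*γ) - s ^ (1 + 2*γ) - t ^ (1 + 2*γ)
        + ((1 + 2*γ) / (2 + 2*γ)) * (s ^ (2 + 2*γ) + t ^ (2 + 2*γ))
        + 2 / ((2 + 2*γ) * (3 + 2*γ))))
    (e : ℝ → ℝ) (he : ContinuousOn e (Icc 0 1))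
    (heig : ∀ t ∈ Icc (0:ℝ) 1, lam * e t = ∫ s in (0:ℝ)..1, K s t * e s) :
    (∀ t ∈ Ioo (0:ℝ) 1,
        HasDerivAt e
          (lam⁻¹ * (-(t ^ (2*γ)) * (∫ s in (0:ℝ)..t, e s)
            + t ^ (1 + 2*γ) * ∫ s in (0:ℝ)..1, e s)) t)
      ∧ ContinuousOn
          (fun t => lam⁻¹ * (-(t ^ (2*γ)) * (∫ s in (0:ℝ)..t, e s)
            + t ^ (1 + 2*γ) * ∫ s in (0:ℝ)..1, e s)) (Ioo 0 1) := by
  have h1 : (0:ℝ) < 1 + 2*γ := by linarith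
  have h2 : (0:ℝ) < 2 + 2*γ := by linarith
  have h3 : (0:ℝ) < 3 + 2*γ := by linarith
  have h1' : (1:ℝ) + 2*γ ≠ 0 := ne_of_gt h1
  have h2' : (2:ℝ) + 2*γ ≠ 0 := ne_of_gt h2
  have h3' : (3:ℝ) + 2*γ ≠ 0 := ne_of_gt h3
  have hlam' : lam ≠ 0 := ne_of_gt hlam
  have hpow : ∀ q : ℝ, 0 ≤ q → Continuous fun s : ℝ => s ^ q := fun q hq =>
    continuous_iff_continuousAt.2 fun x => Real.continuousAt_rpow_const x q (Or.inr hq)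
  have mem0 : (0:ℝ) ∈ Icc (0:ℝ) 1 := left_mem_Icc.2 zero_le_one
  have mem1 : (1:ℝ) ∈ Icc (0:ℝ) 1 := right_mem_Icc.2 zero_le_one
  have intCO : ∀ f : ℝ → ℝ, ContinuousOn f (Icc 0 1) → ∀ a b : ℝ, a ∈ Icc (0:ℝ) 1 →
      b ∈ Icc (0:ℝ) 1 → IntervalIntegrable f volume a b := by
    intro f hf a b ha hb
    have hsub : uIcc a b ⊆ Icc 0 1 := by
      rw [← uIcc_of_le (zero_le_one : (0:ℝ) ≤ 1)]
      exact uIcc_subset_uIcc (by rwa [uIcc_of_le (zero_le_one : (0:ℝ) ≤ 1)])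
        (by rwa [uIcc_of_le (zero_le_one : (0:ℝ) ≤ 1)])
    exact (hf.mono hsub).intervalIntegrable

  have ce : ∀ q : ℝ, 0 ≤ q → ContinuousOn (fun s : ℝ => s ^ q * e s) (Icc 0 1) :=
    fun q hq => ((hpow q hq).continuousOn).mul he
  have intE : IntervalIntegrable e volume 0 1 := intCO e he 0 1 mem0 mem1
  have intP : IntervalIntegrable (fun s : ℝ => s ^ (1+2*γ) * e s) volume 0 1 :=
    intCO _ (ce _ h1.le) 0 1 mem0 mem1
  have intP1 : IntervalIntegrable (fun s : ℝ => s ^ (2+2*γ) * e s) volume 0 1 :=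
    intCO _ (ce _ h2.le) 0 1 mem0 mem1
  set A := ∫ s in (0:ℝ)..1, e s with hA
  set B := ∫ s in (0:ℝ)..1, s ^ (1+2*γ) * e s with hB
  set C := ∫ s in (0:ℝ)..1, s ^ (2+2*γ) * e s with hC
  have key : ∀ t ∈ Icc (0:ℝ) 1, e t = lam⁻¹ *
      ((1+2*γ)⁻¹ * ((∫ s in (0:ℝ)..t, s ^ (1+2*γ) * e s)
          + t ^ (1+2*γ) * (A - ∫ s in (0:ℝ)..t, e s))
        - (1+2*γ)⁻¹ * B + (2+2*γ)⁻¹ * C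
        + ((1+2*γ)⁻¹ * (-(t ^ (1+2*γ)) + ((1+2*γ)/(2+2*γ)) * t ^ (2+2*γ)
            + 2/((2+2*γ)*(3+2*γ)))) * A) := by
    intro t ht
    have cmin : ContinuousOn (fun s : ℝ => min s t ^ (1+2*γ) * e s) (Icc 0 1) :=
      (((hpow _ h1.le).comp (continuous_id.min continuous_const)).continuousOn).mul he
    have imin01 : IntervalIntegrable (fun s : ℝ => min s t ^ (1+2*γ) * e s) volume 0 1 :=
      intCO _ cmin 0 1 mem0 mem1
    have hsplitE : (∫ s in (0:ℝ)..t, e s) + (∫ s in t..1, e s) = A := by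
      rw [hA]
      exact integral_add_adjacent_intervals (intCO e he 0 t mem0 ht) (intCO e he t 1 ht mem1)
    have hminsplit : (∫ s in (0:ℝ)..1, min s t ^ (1+2*γ) * e s)
        = (∫ s in (0:ℝ)..t, s ^ (1+2*γ) * e s)
          + t ^ (1+2*γ) * (A - ∫ s in (0:ℝ)..t, e s) := by
      have hadj := integral_add_adjacent_intervals (μ := volume)
        (intCO _ cmin 0 t mem0 ht) (intCO _ cmin t 1 ht mem1)
      have e1 : (∫ s in (0:ℝ)..t, min s t ^ (1+2*γ) * e s)
          = ∫ s in (0:ℝ)..t, s ^ (1+2*γ) * e s := by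
        refine integral_congr fun s hs => ?_
        rw [uIcc_of_le ht.1] at hs
        rw [min_eq_left hs.2]
      have e2 : (∫ s in t..1, min s t ^ (1+2*γ) * e s) = t ^ (1+2*γ) * ∫ s in t..1, e s := by
        rw [← intervalIntegral.integral_const_mul]
        refine integral_congr fun s hs => ?_
        rw [uIcc_of_le ht.2] at hs
        rw [min_eq_right hs.1]
      rw [e1, e2] at hadj
      rw [← hadj]
      have h9 : (∫ s in t..1, e s) = A - ∫ s in (0:ℝ)..t, e s := by linarith
      rw [h9]
    have hpt : ∀ s : ℝ, K s t * e s
        = (1+2*γ)⁻¹ * (min s t ^ (1+2*γ) * e s)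
          + (-(1+2*γ)⁻¹) * (s ^ (1+2*γ) * e s)
          + (2+2*γ)⁻¹ * (s ^ (2+2*γ) * e s)
          + ((1+2*γ)⁻¹ * (-(t ^ (1+2*γ)) + ((1+2*γ)/(2+2*γ)) * t ^ (2+2*γ)
            + 2/((2+2*γ)*(3+2*γ)))) * e s := by
      intro s
      rw [hK]
      field_simp
      ring
    have hcalc : lam * e t
        = (1+2*γ)⁻¹ * (∫ s in (0:ℝ)..1, min s t ^ (1+2*γ) * e s)
          + (-(1+2*γ)⁻¹) * B + (2+2*γ)⁻¹ * C
          + ((1+2*γ)⁻¹ * (-(t ^ (1+2*γ)) + ((1+2*γ)/(2+2*γ)) * t ^ (2+2*γ)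
            + 2/((2+2*γ)*(3+2*γ)))) * A := by
      rw [heig t ht]
      simp only [hpt]
      rw [integral_add (((imin01.const_mul _).add (intP.const_mul _)).add (intP1.const_mul _))
          (intE.const_mul _),
        integral_add ((imin01.const_mul _).add (intP.const_mul _)) (intP1.const_mul _),
        integral_add (imin01.const_mul _) (intP.const_mul _),
        intervalIntegral.integral_const_mul, intervalIntegral.integral_const_mul, intervalIntegral.integral_const_mul, intervalIntegral.integral_const_mul,
        ← hA, ← hB, ← hC]
    rw [eq_inv_mul_iff_mul_eq₀ hlam', hcalc, hminsplit]
    ring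

  have hHd : ∀ t ∈ Ioo (0:ℝ) 1, HasDerivAt (fun u : ℝ => ∫ s in (0:ℝ)..u, e s) (e t) t := by
    intro t ht
    exact integral_hasDerivAt_right (intCO e he 0 t mem0 (Ioo_subset_Icc_self ht))
      (ContinuousOn.stronglyMeasurableAtFilter isOpen_Ioo (he.mono Ioo_subset_Icc_self) t ht)
      (he.continuousAt (Icc_mem_nhds ht.1 ht.2))
  have hGd : ∀ t ∈ Ioo (0:ℝ) 1, HasDerivAt (fun u : ℝ => ∫ s in (0:ℝ)..u, s ^ (1+2*γ) * e s)
      (t ^ (1+2*γ) * e t) t := by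
    intro t ht
    exact integral_hasDerivAt_right (intCO _ (ce _ h1.le) 0 t mem0 (Ioo_subset_Icc_self ht))
      (ContinuousOn.stronglyMeasurableAtFilter isOpen_Ioo ((ce _ h1.le).mono Ioo_subset_Icc_self) t ht)
      (((hpow _ h1.le).continuousAt).mul (he.continuousAt (Icc_mem_nhds ht.1 ht.2)))
  constructor
  · intro t ht
    have ht0 : t ≠ 0 := ne_of_gt ht.1
    have hP : HasDerivAt (fun x : ℝ => x ^ (1+2*γ)) ((1+2*γ) * t ^ (2*γ)) t := by
      have h := Real.hasDerivAt_rpow_const (x := t) (p := 1+2*γ) (Or.inl ht0)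
      simpa [show (1:ℝ)+2*γ-1 = 2*γ by ring] using h
    have hP1 : HasDerivAt (fun x : ℝ => x ^ (2+2*γ)) ((2+2*γ) * t ^ (1+2*γ)) t := by
      have h := Real.hasDerivAt_rpow_const (x := t) (p := 2+2*γ) (Or.inl ht0)
      simpa [show (2:ℝ)+2*γ-1 = 1+2*γ by ring] using h
    have hb := ((((((hGd t ht).add (hP.mul ((hHd t ht).const_sub A))).const_mul ((1+2*γ)⁻¹)).sub_const
        ((1+2*γ)⁻¹ * B)).add_const ((2+2*γ)⁻¹ * C)).add
        ((((hP.neg.add (hP1.const_mul ((1+2*γ)/(2+2*γ)))).add_const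
          (2/((2+2*γ)*(3+2*γ)))).const_mul ((1+2*γ)⁻¹)).mul_const A)).const_mul lam⁻¹
    have heq : e =ᶠ[nhds t] (fun x : ℝ => lam⁻¹ *
        ((1+2*γ)⁻¹ * ((∫ s in (0:ℝ)..x, s ^ (1+2*γ) * e s)
          + x ^ (1+2*γ) * (A - ∫ s in (0:ℝ)..x, e s))
        - (1+2*γ)⁻¹ * B + (2+2*γ)⁻¹ * C
        + ((1+2*γ)⁻¹ * (-(x ^ (1+2*γ)) + ((1+2*γ)/(2+2*γ)) * x ^ (2+2*γ)
            + 2/((2+2*γ)*(3+2*γ)))) * A)) :=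
      Filter.eventuallyEq_of_mem (Ioo_mem_nhds ht.1 ht.2)
        (fun x hx => key x (Ioo_subset_Icc_self hx))
    have hfin := hb.congr_of_eventuallyEq heq
    refine hfin.congr_deriv ?_
    field_simp [show (1:ℝ) + γ ≠ 0 by linarith]
    ring
  · intro t ht
    have c1t : ContinuousAt (fun x : ℝ => x ^ (2*γ)) t :=
      Real.continuousAt_rpow_const t (2*γ) (Or.inl (ne_of_gt ht.1))
    have cH : ContinuousAt (fun x : ℝ => ∫ s in (0:ℝ)..x, e s) t := (hHd t ht).continuousAt
    exact (continuousAt_const.mul ((c1t.neg.mul cH).add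
      (((hpow _ h1.le).continuousAt).mul continuousAt_const))).continuousWithinAt
end

section
/- Let γ > -1/2, λ > 0, and suppose e : [0,1] → ℝ is twice continuously differentiable and satisfies λ·e'(t) = -t^{2γ}·∫_0^t e(s) ds + t^{1+2γ}·∫_0^1 e(s) ds for all t ∈ [0,1]. Then the function y defined by y(x) = e(x^{1/(1+2γ)}) for x ∈ (0,1] satisfies (1+2γ)²·λ·x^{2γ/(1+2γ)}·y''(x) + y(x) = (1+2γ)^{-1}·∫_0^1 u^{-2γ/(1+2γ)}·y(u) du for all x ∈ (0,1). -/
open Real intervalIntegral Set MeasureTheory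

lemma aux_int_sub (γ : ℝ) (hb : 0 < 1 + 2*γ) (e y : ℝ → ℝ)
    (hy : ∀ x ∈ Ioc (0:ℝ) 1, y x = e (x ^ ((1:ℝ) / (1 + 2*γ)))) :
    ∫ u in (0:ℝ)..1, u ^ (-(2*γ) / (1 + 2*γ)) * y u
      = (1 + 2*γ) * ∫ s in (0:ℝ)..1, e s := by
  set b : ℝ := (1:ℝ) / (1 + 2*γ) with hbdef
  have hbpos : 0 < b := by positivity
  have hexp : -(2*γ) / (1 + 2*γ) = b - 1 := by rw [hbdef]; field_simp; ring
  have hmem : ∀ x : ℝ, 0 < x → (x ^ b ∈ Ioc (0:ℝ) 1 ↔ x ∈ Ioc (0:ℝ) 1) := by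
    intro x hx
    simp only [mem_Ioc, rpow_pos_of_pos hx b, hx, true_and]
    constructor
    · intro h
      by_contra h'
      push_neg at h'
      have : 1 < x ^ b := (one_lt_rpow_iff_of_pos hx).mpr (Or.inl ⟨h', hbpos⟩)
      linarith
    · intro h
      exact rpow_le_one hx.le h hbpos.le
  have key : ∫ x in Ioi (0:ℝ), (b * x ^ (b - 1)) • ((Ioc (0:ℝ) 1).indicator e (x ^ b))
      = ∫ u in Ioi (0:ℝ), (Ioc (0:ℝ) 1).indicator e u :=
    integral_comp_rpow_Ioi_of_pos hbpos
  have lhs_eq : ∫ x in Ioi (0:ℝ), (b * x ^ (b - 1)) • ((Ioc (0:ℝ) 1).indicator e (x ^ b))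
      = ∫ x in Ioc (0:ℝ) 1, b * (x ^ (b - 1) * e (x ^ b)) := by
    rw [show (∫ x in Ioi (0:ℝ), (b * x ^ (b - 1)) • ((Ioc (0:ℝ) 1).indicator e (x ^ b)))
        = ∫ x in Ioi (0:ℝ), (Ioc (0:ℝ) 1).indicator (fun x => b * (x ^ (b - 1) * e (x ^ b))) x
        from setIntegral_congr_fun measurableSet_Ioi (fun x hx => by
          have hx' : (0:ℝ) < x := hx
          by_cases hmem' : x ∈ Ioc (0:ℝ) 1
          · rw [Set.indicator_of_mem ((hmem x hx').mpr hmem'),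
              Set.indicator_of_mem hmem', smul_eq_mul]
            ring
          · rw [Set.indicator_of_notMem (fun h => hmem' ((hmem x hx').mp h)),
              Set.indicator_of_notMem hmem', smul_zero])]
    rw [setIntegral_indicator measurableSet_Ioc]
    congr 1
    rw [Set.inter_eq_right.mpr Ioc_subset_Ioi_self]
  have rhs_eq : ∫ u in Ioi (0:ℝ), (Ioc (0:ℝ) 1).indicator e u = ∫ u in Ioc (0:ℝ) 1, e u := by
    rw [setIntegral_indicator measurableSet_Ioc]
    congr 1
    rw [Set.inter_eq_right.mpr Ioc_subset_Ioi_self]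
  have step : ∫ x in Ioc (0:ℝ) 1, b * (x ^ (b - 1) * e (x ^ b))
      = ∫ u in Ioc (0:ℝ) 1, e u := by rw [← lhs_eq, key, rhs_eq]
  have step2 : ∫ x in Ioc (0:ℝ) 1, x ^ (b - 1) * e (x ^ b)
      = b⁻¹ * ∫ u in Ioc (0:ℝ) 1, e u := by
    rw [← step, MeasureTheory.integral_const_mul, ← mul_assoc, inv_mul_cancel₀ hbpos.ne', one_mul]
  calc ∫ u in (0:ℝ)..1, u ^ (-(2*γ) / (1 + 2*γ)) * y u
      = ∫ u in Ioc (0:ℝ) 1, u ^ (b - 1) * e (u ^ b) := by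
        rw [integral_of_le zero_le_one]
        refine setIntegral_congr_fun measurableSet_Ioc (fun u hu => ?_)
        rw [hexp, hy u hu]
    _ = b⁻¹ * ∫ u in Ioc (0:ℝ) 1, e u := step2
    _ = (1 + 2*γ) * ∫ s in (0:ℝ)..1, e s := by
        rw [integral_of_le zero_le_one, hbdef, one_div, inv_inv]

theorem stmt_11 (γ : ℝ) (hγ : -1/2 < γ) (lam : ℝ) (hlam : 0 < lam)
    (e e' e'' : ℝ → ℝ)
    (hd1 : ∀ t ∈ Icc (0:ℝ) 1, HasDerivAt e (e' t) t)
    (hd2 : ∀ t ∈ Icc (0:ℝ) 1, HasDerivAt e' (e'' t) t)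
    (hcont : ContinuousOn e'' (Icc 0 1))
    (heq : ∀ t ∈ Icc (0:ℝ) 1,
      lam * e' t = -(t ^ (2*γ)) * (∫ s in (0:ℝ)..t, e s)
        + t ^ (1 + 2*γ) * ∫ s in (0:ℝ)..1, e s)
    (y : ℝ → ℝ) (hy : ∀ x ∈ Ioc (0:ℝ) 1, y x = e (x ^ ((1:ℝ) / (1 + 2*γ)))) :
    ∀ x ∈ Ioo (0:ℝ) 1,
      (1 + 2*γ) ^ 2 * lam * x ^ (2*γ / (1 + 2*γ)) * deriv (deriv y) x + y x
        = (1 + 2*γ)⁻¹ * ∫ u in (0:ℝ)..1, u ^ (-(2*γ) / (1 + 2*γ)) * y u := by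
  have hb : (0:ℝ) < 1 + 2*γ := by linarith
  have hint := aux_int_sub γ hb e y hy
  set b : ℝ := (1:ℝ) / (1 + 2*γ) with hbdef
  have hbpos : 0 < b := by positivity
  have hbmul : (1 + 2*γ) * b = 1 := by rw [hbdef]; field_simp
  intro x hx
  obtain ⟨hx0, hx1⟩ := hx
  -- first derivative of y on Ioo 0 1
  have hD1 : ∀ z ∈ Ioo (0:ℝ) 1, HasDerivAt y (e' (z ^ b) * (b * z ^ (b - 1))) z := by
    intro z hz
    obtain ⟨hz0, hz1⟩ := hz
    have hzI : z ^ b ∈ Icc (0:ℝ) 1 :=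
      ⟨(rpow_pos_of_pos hz0 b).le, rpow_le_one hz0.le hz1.le hbpos.le⟩
    have hφ : HasDerivAt (fun w : ℝ => w ^ b) (b * z ^ (b - 1)) z :=
      hasDerivAt_rpow_const (Or.inl hz0.ne')
    have hcomp : HasDerivAt (fun w : ℝ => e (w ^ b)) (e' (z ^ b) * (b * z ^ (b - 1))) z :=
      (hd1 (z ^ b) hzI).comp z hφ
    refine hcomp.congr_of_eventuallyEq ?_
    filter_upwards [isOpen_Ioo.mem_nhds (⟨hz0, hz1⟩ : z ∈ Ioo (0:ℝ) 1)] with w hw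
    exact hy w ⟨hw.1, hw.2.le⟩
  have hev : deriv y =ᶠ[nhds x] fun z => e' (z ^ b) * (b * z ^ (b - 1)) := by
    filter_upwards [isOpen_Ioo.mem_nhds (⟨hx0, hx1⟩ : x ∈ Ioo (0:ℝ) 1)] with z hz
    exact (hD1 z hz).deriv
  set t : ℝ := x ^ b with htdef
  have ht0 : 0 < t := rpow_pos_of_pos hx0 b
  have ht1 : t < 1 := rpow_lt_one hx0.le hx1 hbpos
  have htI : t ∈ Icc (0:ℝ) 1 := ⟨ht0.le, ht1.le⟩
  have hφ : HasDerivAt (fun w : ℝ => w ^ b) (b * x ^ (b - 1)) x :=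
    hasDerivAt_rpow_const (Or.inl hx0.ne')
  have hD2 : HasDerivAt (fun z => e' (z ^ b) * (b * z ^ (b - 1)))
      (e'' t * (b * x ^ (b - 1)) * (b * x ^ (b - 1))
        + e' t * (b * ((b - 1) * x ^ (b - 1 - 1)))) x := by
    have h1 : HasDerivAt (fun z : ℝ => e' (z ^ b)) (e'' t * (b * x ^ (b - 1))) x :=
      (hd2 t htI).comp x hφ
    have h2 : HasDerivAt (fun z : ℝ => b * z ^ (b - 1)) (b * ((b - 1) * x ^ (b - 1 - 1))) x :=
      (hasDerivAt_rpow_const (Or.inl hx0.ne')).const_mul b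
    exact h1.mul h2
  have hDy2 : deriv (deriv y) x
      = e'' t * (b * x ^ (b - 1)) * (b * x ^ (b - 1))
        + e' t * (b * ((b - 1) * x ^ (b - 1 - 1))) := by
    rw [hev.deriv_eq]
    exact hD2.deriv
  -- fundamental theorem of calculus
  have hecont : ∀ z ∈ Ioo (0:ℝ) 1, ContinuousAt e z :=
    fun z hz => (hd1 z (Ioo_subset_Icc_self hz)).continuousAt
  have hF : HasDerivAt (fun s => ∫ u in (0:ℝ)..s, e u) (e t) t := by
    refine integral_hasDerivAt_right ?_ ?_ ((hd1 t htI).continuousAt)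
    · refine ContinuousOn.intervalIntegrable ?_
      refine ContinuousOn.mono (fun s hs => (hd1 s hs).continuousAt.continuousWithinAt) ?_
      rw [uIcc_of_le ht0.le]
      exact Icc_subset_Icc le_rfl ht1.le
    · exact ContinuousAt.stronglyMeasurableAtFilter isOpen_Ioo hecont t ⟨ht0, ht1⟩
  set F : ℝ → ℝ := fun s => ∫ u in (0:ℝ)..s, e u with hFdef
  set C : ℝ := ∫ s in (0:ℝ)..1, e s with hCdef
  -- second derivative relation for e
  have hg : HasDerivAt (fun s : ℝ => -(s ^ (2*γ)) * F s + s ^ (1 + 2*γ) * C)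
      (-(2*γ * t ^ (2*γ - 1)) * F t + -(t ^ (2*γ)) * e t
        + (1 + 2*γ) * t ^ (1 + 2*γ - 1) * C) t := by
    have ha : HasDerivAt (fun s : ℝ => -(s ^ (2*γ))) (-(2*γ * t ^ (2*γ - 1))) t :=
      (hasDerivAt_rpow_const (Or.inl ht0.ne')).neg
    have hb' : HasDerivAt (fun s : ℝ => s ^ (1 + 2*γ) * C)
        ((1 + 2*γ) * t ^ (1 + 2*γ - 1) * C) t :=
      (hasDerivAt_rpow_const (Or.inl ht0.ne')).mul_const C
    exact (ha.mul hF).add hb'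
  have hle : HasDerivAt (fun s => lam * e' s) (lam * e'' t) t :=
    (hd2 t htI).const_mul lam
  have hle2 : HasDerivAt (fun s => lam * e' s)
      (-(2*γ * t ^ (2*γ - 1)) * F t + -(t ^ (2*γ)) * e t
        + (1 + 2*γ) * t ^ (1 + 2*γ - 1) * C) t := by
    refine hg.congr_of_eventuallyEq ?_
    filter_upwards [isOpen_Ioo.mem_nhds (⟨ht0, ht1⟩ : t ∈ Ioo (0:ℝ) 1)] with s hs
    exact heq s (Ioo_subset_Icc_self hs)
  have hE2 : lam * e'' t
      = -(2*γ * t ^ (2*γ - 1)) * F t + -(t ^ (2*γ)) * e t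
        + (1 + 2*γ) * t ^ (1 + 2*γ - 1) * C := hle.unique hle2
  have hE1 : lam * e' t = -(t ^ (2*γ)) * F t + t ^ (1 + 2*γ) * C := heq t htI
  -- power identities
  have e1 : x ^ (2*γ / (1 + 2*γ)) * (x ^ (b - 1) * x ^ (b - 1)) = t ^ (-(2*γ)) := by
    rw [← rpow_add hx0, ← rpow_add hx0, htdef, ← rpow_mul hx0.le]
    congr 1
    rw [hbdef]
    field_simp
    ring
  have e2 : x ^ (2*γ / (1 + 2*γ)) * x ^ (b - 1 - 1) = t ^ (-(1 + 2*γ)) := by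
    rw [← rpow_add hx0, htdef, ← rpow_mul hx0.le]
    congr 1
    rw [hbdef]
    field_simp
    ring
  have e3 : t ^ (-(2*γ)) * t ^ (2*γ - 1) = t ^ (-1 : ℝ) := by
    rw [← rpow_add ht0]; congr 1; ring
  have e4 : t ^ (-(2*γ)) * t ^ (2*γ) = 1 := by
    rw [← rpow_add ht0, show -(2*γ) + 2*γ = 0 by ring, rpow_zero]
  have e5 : t ^ (-(1 + 2*γ)) * t ^ (2*γ) = t ^ (-1 : ℝ) := by
    rw [← rpow_add ht0]; congr 1; ring
  have e6 : t ^ (-(1 + 2*γ)) * t ^ (1 + 2*γ) = 1 := by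
    rw [← rpow_add ht0, show -(1 + 2*γ) + (1 + 2*γ) = 0 by ring, rpow_zero]
  have e7 : t ^ (1 + 2*γ - 1) = t ^ (2*γ) := by congr 1; ring
  have c2 : (1 + 2*γ) ^ 2 * b * (b - 1) = -(2*γ) := by
    rw [hbdef]; field_simp; ring
  have h2 : lam * e'' t * t ^ (-(2*γ))
      = -(2*γ) * t ^ (-1 : ℝ) * F t - e t + (1 + 2*γ) * C := by
    rw [hE2, e7]
    linear_combination (-(2*γ) * F t) * e3 + ((1 + 2*γ) * C - e t) * e4
  have h1 : lam * e' t * t ^ (-(1 + 2*γ)) = -(t ^ (-1 : ℝ)) * F t + C := by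
    rw [hE1]
    linear_combination (-(F t)) * e5 + C * e6
  have hyx : y x = e t := by rw [hy x ⟨hx0, hx1.le⟩, ← htdef]
  rw [hyx, hDy2, hint]
  calc (1 + 2*γ) ^ 2 * lam * x ^ (2*γ / (1 + 2*γ))
        * (e'' t * (b * x ^ (b - 1)) * (b * x ^ (b - 1))
          + e' t * (b * ((b - 1) * x ^ (b - 1 - 1)))) + e t
      = lam * e'' t * (((1 + 2*γ) * b) ^ 2
            * (x ^ (2*γ / (1 + 2*γ)) * (x ^ (b - 1) * x ^ (b - 1))))
        + lam * e' t * (((1 + 2*γ) ^ 2 * b * (b - 1))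
            * (x ^ (2*γ / (1 + 2*γ)) * x ^ (b - 1 - 1))) + e t := by ring
    _ = lam * e'' t * ((1:ℝ) ^ 2 * t ^ (-(2*γ)))
        + lam * e' t * (-(2*γ) * t ^ (-(1 + 2*γ))) + e t := by
          rw [hbmul, c2, e1, e2]
    _ = lam * e'' t * t ^ (-(2*γ)) + (-(2*γ)) * (lam * e' t * t ^ (-(1 + 2*γ))) + e t := by
          ring
    _ = (-(2*γ) * t ^ (-1 : ℝ) * F t - e t + (1 + 2*γ) * C)
        + (-(2*γ)) * (-(t ^ (-1 : ℝ)) * F t + C) + e t := by rw [h2, h1]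
    _ = C := by ring
    _ = (1 + 2*γ)⁻¹ * ((1 + 2*γ) * C) := by
          rw [← mul_assoc, inv_mul_cancel₀ hb.ne', one_mul]
end

section
/- Let λ > 0 and β > -1, and set ν = 1/(2(β+1)). Then the function y(x) = x^{1/2}·J_ν(x^{β+1}/((β+1)√λ)) satisfies the differential equation λ·y''(x) + x^{2β}·y(x) = 0 for all x > 0, where J_ν is the Bessel function of the first kind of order ν. -/
open Real

/-- The Bessel function of the first kind of order `ν`,
`J_ν(x) = (x/2)^ν ∑_{k≥0} (-x²/4)^k / (Γ(ν+k+1) k!)`.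
(Recall that in Lean division by zero yields zero, which implements the convention
that the terms with `Γ(ν+k+1) = ∞` vanish when `ν` is a negative integer.) -/
noncomputable def besselJ (ν x : ℝ) : ℝ :=
  (x / 2) ^ ν * ∑' k : ℕ, (-(x ^ 2) / 4) ^ k / (Real.Gamma (ν + k + 1) * (Nat.factorial k))


open Filter Topology


lemma auxSummable (b : ℕ → ℝ) (M : ℝ) (hM0 : 0 ≤ M)
    (hM : ∀ k : ℕ, ((k : ℝ) + 1) * |b (k + 1)| ≤ M * |b k|) (t : ℝ) :
    Summable (fun k : ℕ => b k * t ^ k) := by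
  apply summable_of_ratio_norm_eventually_le (r := 1/2) (by norm_num)
  filter_upwards [eventually_ge_atTop ⌈2 * (M * |t|)⌉₊] with k hk
  have hk2 : 2 * (M * |t|) ≤ (k : ℝ) + 1 := by
    calc 2 * (M * |t|) ≤ (⌈2 * (M * |t|)⌉₊ : ℝ) := Nat.le_ceil _
    _ ≤ (k : ℝ) := by exact_mod_cast hk
    _ ≤ (k : ℝ) + 1 := by linarith
  have e1 : ‖b (k+1) * t ^ (k+1)‖ = |b (k+1)| * |t| ^ k * |t| := by
    rw [Real.norm_eq_abs, abs_mul, abs_pow, pow_succ]; ring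
  have e2 : ‖b k * t ^ k‖ = |b k| * |t| ^ k := by
    rw [Real.norm_eq_abs, abs_mul, abs_pow]
  rw [e1, e2]
  have hT : (0:ℝ) ≤ |t| ^ k := pow_nonneg (abs_nonneg t) k
  have f1 : (((k:ℝ)+1) * |b (k+1)|) * (|t| * |t|^k) ≤ (M * |b k|) * (|t| * |t|^k) :=
    mul_le_mul_of_nonneg_right (hM k) (by positivity)
  have f2 : (M * |t|) * (|b k| * |t|^k) ≤ (((k:ℝ)+1)/2) * (|b k| * |t|^k) := by
    apply mul_le_mul_of_nonneg_right _ (by positivity)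
    linarith
  have hk1 : (0:ℝ) < (k:ℝ) + 1 := by positivity
  rw [div_mul_eq_mul_div, le_div_iff₀ (by norm_num : (0:ℝ) < 2)] at f2 ⊢
  nlinarith [abs_nonneg (b (k+1)), abs_nonneg (b k), abs_nonneg t]

lemma auxDeriv (b : ℕ → ℝ) (M : ℝ) (hM0 : 0 ≤ M)
    (hM : ∀ k : ℕ, ((k : ℝ) + 1) * |b (k + 1)| ≤ M * |b k|) (t : ℝ) :
    HasDerivAt (fun s : ℝ => ∑' k : ℕ, b k * s ^ k)
      (∑' k : ℕ, (((k : ℝ) + 1) * b (k + 1)) * t ^ k) t := by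
  set R : ℝ := |t| + 1 with hRdef
  have hR1 : (1:ℝ) ≤ R := by have := abs_nonneg t; simp only [hRdef]; linarith
  have hR0 : (0:ℝ) ≤ R := by linarith
  have hsumR : Summable (fun k : ℕ => |b k| * R ^ k) := by
    have h := (auxSummable b M hM0 hM R).abs
    simpa [abs_mul, abs_pow, abs_of_nonneg hR0] using h
  set u : ℕ → ℝ := fun n => (n : ℝ) * |b n| * R ^ (n - 1) with hu_def
  have hu : Summable u := by
    rw [← summable_nat_add_iff 1]
    apply Summable.of_nonneg_of_le (fun k => by positivity) _ (hsumR.mul_left M)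
    intro k
    have : u (k + 1) = (((k:ℝ)) + 1) * |b (k+1)| * R ^ k := by
      simp [hu_def]
    rw [this]
    calc (((k:ℝ)) + 1) * |b (k+1)| * R ^ k ≤ M * |b k| * R ^ k :=
          mul_le_mul_of_nonneg_right (hM k) (by positivity)
      _ = M * (|b k| * R ^ k) := by ring
  have hball : ∀ n : ℕ, ∀ x ∈ Metric.ball (0:ℝ) R, ‖b n * ((n:ℝ) * x ^ (n-1))‖ ≤ u n := by
    intro n x hx
    have hxR : |x| ≤ R := le_of_lt (by simpa using hx)
    have : ‖b n * ((n:ℝ) * x ^ (n-1))‖ = |b n| * ((n:ℝ) * |x| ^ (n-1)) := by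
      rw [Real.norm_eq_abs, abs_mul, abs_mul, abs_pow, Nat.abs_cast]
    rw [this]
    have h1 : |x| ^ (n-1) ≤ R ^ (n-1) := pow_le_pow_left₀ (abs_nonneg x) hxR _
    calc |b n| * ((n:ℝ) * |x| ^ (n-1)) ≤ |b n| * ((n:ℝ) * R ^ (n-1)) := by
          apply mul_le_mul_of_nonneg_left _ (abs_nonneg _)
          exact mul_le_mul_of_nonneg_left h1 (Nat.cast_nonneg n)
      _ = u n := by simp [hu_def]; ring
  have htmem : t ∈ Metric.ball (0:ℝ) R := by
    simp [hRdef]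
  have key := hasDerivAt_tsum_of_isPreconnected hu Metric.isOpen_ball
      (convex_ball (0:ℝ) R).isPreconnected
      (g := fun n x => b n * x ^ n) (g' := fun n x => b n * ((n:ℝ) * x ^ (n-1)))
      (fun n x _ => (hasDerivAt_pow n x).const_mul (b n))
      hball htmem (auxSummable b M hM0 hM t) htmem
  have hsum' : Summable (fun n : ℕ => b n * ((n:ℝ) * t ^ (n-1))) :=
    Summable.of_norm_bounded hu (fun n => hball n t htmem)
  have : (∑' n : ℕ, b n * ((n:ℝ) * t ^ (n-1)))
      = ∑' k : ℕ, (((k : ℝ) + 1) * b (k + 1)) * t ^ k := by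
    rw [Summable.tsum_eq_zero_add hsum']
    simp only [Nat.cast_zero, zero_mul, mul_zero, zero_add]
    apply tsum_congr; intro k
    push_cast
    ring
  rw [← this]
  exact key

theorem stmt_12 (lam β : ℝ) (hlam : 0 < lam) (hβ : -1 < β) (ν : ℝ)
    (hν : ν = 1 / (2 * (β + 1))) :
    ∀ x : ℝ, 0 < x →
      lam * deriv (deriv (fun z : ℝ =>
          z ^ ((1:ℝ)/2) * besselJ ν (z ^ (β + 1) / ((β + 1) * Real.sqrt lam)))) x
        + x ^ (2*β) *
          (x ^ ((1:ℝ)/2) * besselJ ν (x ^ (β + 1) / ((β + 1) * Real.sqrt lam))) = 0 := by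
  intro x hx
  have hβ1 : 0 < β + 1 := by linarith
  have hν0 : 0 < ν := by rw [hν]; positivity
  have hsl : 0 < Real.sqrt lam := Real.sqrt_pos.mpr hlam
  set m : ℝ := 2 * (β + 1) with hm
  set D : ℝ := 2 * ((β + 1) * Real.sqrt lam) with hD
  have hDpos : 0 < D := by rw [hD]; positivity
  have hDν : 0 < D ^ ν := Real.rpow_pos_of_pos hDpos ν
  set r : ℝ := -(1 / (4 * (β + 1) ^ 2 * lam)) with hr
  set b : ℕ → ℝ := fun k : ℕ =>
    r ^ k / (Real.Gamma (ν + k + 1) * (Nat.factorial k)) with hb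
  have hΓ : ∀ k : ℕ, 0 < Real.Gamma (ν + k + 1) := fun k =>
    Real.Gamma_pos_of_pos (by positivity)
  -- the basic coefficient recurrence
  have hbk1 : ∀ k : ℕ, b (k + 1) = r * b k / ((ν + k + 1) * ((k : ℝ) + 1)) := by
    intro k
    have hg : 0 < Real.Gamma (ν + k + 1) := hΓ k
    have hfk : (0:ℝ) < (Nat.factorial k : ℝ) := by exact_mod_cast k.factorial_pos
    have hΓs : Real.Gamma (ν + ((k : ℝ) + 1) + 1) = (ν + k + 1) * Real.Gamma (ν + k + 1) := by
      rw [show ν + ((k:ℝ) + 1) + 1 = (ν + (k:ℝ) + 1) + 1 by ring,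
        Real.Gamma_add_one (by positivity)]
    simp only [hb]
    push_cast [Nat.factorial_succ]
    rw [hΓs, pow_succ]
    have h1 : ν + (k:ℝ) + 1 ≠ 0 := by positivity
    have h2 : ((k:ℝ) + 1) ≠ 0 := by positivity
    field_simp
  have hMb : ∀ k : ℕ, ((k : ℝ) + 1) * |b (k + 1)| ≤ |r| * |b k| := by
    intro k
    have hpos : (0:ℝ) < (ν + k + 1) * ((k:ℝ) + 1) := by positivity
    rw [hbk1 k, abs_div, abs_mul, abs_of_pos hpos]
    have hle : (1:ℝ) ≤ ν + (k:ℝ) + 1 := by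
      have : (0:ℝ) ≤ (k:ℝ) := Nat.cast_nonneg k
      linarith
    have h1 : ((k:ℝ) + 1) * (|r| * |b k| / ((ν + k + 1) * ((k:ℝ) + 1)))
        = |r| * |b k| / (ν + (k:ℝ) + 1) := by
      field_simp
    rw [h1]
    exact div_le_self (by positivity) hle
  set b1 : ℕ → ℝ := fun k : ℕ => ((k : ℝ) + 1) * b (k + 1) with hb1
  set b2 : ℕ → ℝ := fun k : ℕ => ((k : ℝ) + 1) * b1 (k + 1) with hb2
  have hMb1 : ∀ k : ℕ, ((k : ℝ) + 1) * |b1 (k + 1)| ≤ |r| * |b1 k| := by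
    intro k
    have h := hMb (k + 1)
    push_cast at h
    simp only [hb1]
    push_cast
    rw [show |((k:ℝ) + 1 + 1) * b (k + 1 + 1)| = ((k:ℝ) + 1 + 1) * |b (k + 1 + 1)| by
        rw [abs_mul, abs_of_nonneg (by positivity : (0:ℝ) ≤ (k:ℝ) + 1 + 1)],
      show |((k:ℝ) + 1) * b (k + 1)| = ((k:ℝ) + 1) * |b (k + 1)| by
        rw [abs_mul, abs_of_nonneg (by positivity : (0:ℝ) ≤ (k:ℝ) + 1)]]
    nlinarith [abs_nonneg (b (k + 1 + 1)), abs_nonneg (b (k + 1)), Nat.cast_nonneg (α := ℝ) k,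
      abs_nonneg r]
  set F : ℝ → ℝ := fun t => ∑' k : ℕ, b k * t ^ k with hF
  set F1 : ℝ → ℝ := fun t => ∑' k : ℕ, b1 k * t ^ k with hF1
  set F2 : ℝ → ℝ := fun t => ∑' k : ℕ, b2 k * t ^ k with hF2
  have hFd : ∀ t : ℝ, HasDerivAt F (F1 t) t := fun t =>
    auxDeriv b |r| (abs_nonneg r) hMb t
  have hF1d : ∀ t : ℝ, HasDerivAt F1 (F2 t) t := fun t =>
    auxDeriv b1 |r| (abs_nonneg r) hMb1 t
  -- the function agrees with z * F (z^m) / D^ν on (0, ∞)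
  have hEq : ∀ z ∈ Set.Ioi (0:ℝ),
      z ^ ((1:ℝ)/2) * besselJ ν (z ^ (β + 1) / ((β + 1) * Real.sqrt lam))
        = z * F (z ^ m) / D ^ ν := by
    intro z hz
    have hz : 0 < z := hz
    have hzp : 0 < z ^ (β + 1) := Real.rpow_pos_of_pos hz _
    rw [besselJ]
    have hw2 : -((z ^ (β + 1) / ((β + 1) * Real.sqrt lam)) ^ 2) / 4 = r * z ^ m := by
      have h1 : (z ^ (β + 1)) ^ (2:ℕ) = z ^ m := by
        rw [← Real.rpow_natCast (z ^ (β + 1)) 2, ← Real.rpow_mul hz.le]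
        rw [show (β + 1) * ((2:ℕ):ℝ) = m by push_cast; rw [hm]; ring]
      have h2 : Real.sqrt lam ^ 2 = lam := Real.sq_sqrt hlam.le
      rw [div_pow, h1, mul_pow, h2, hr]
      have hc : ((β + 1) ^ 2 * lam) ≠ 0 := by positivity
      field_simp
    have htsum : (∑' k : ℕ, (-((z ^ (β + 1) / ((β + 1) * Real.sqrt lam)) ^ 2) / 4) ^ k /
          (Real.Gamma (ν + k + 1) * (Nat.factorial k))) = F (z ^ m) := by
      rw [hF]
      apply tsum_congr
      intro k
      rw [hw2, mul_pow]
      simp only [hb]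
      ring
    have hpre : (z ^ (β + 1) / ((β + 1) * Real.sqrt lam) / 2) ^ ν
        = z ^ ((1:ℝ)/2) / D ^ ν := by
      rw [show z ^ (β + 1) / ((β + 1) * Real.sqrt lam) / 2 = z ^ (β + 1) / D by
          rw [div_div]; congr 1; rw [hD]; ring,
        Real.div_rpow hzp.le hDpos.le, ← Real.rpow_mul hz.le,
        show (β + 1) * ν = 1/2 by rw [hν, hm]; field_simp]
    rw [htsum, hpre]
    have hzz : z ^ ((1:ℝ)/2) * z ^ ((1:ℝ)/2) = z := by
      rw [← Real.rpow_add hz]; norm_num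
    field_simp
    linear_combination F (z ^ m) * hzz
  -- derivative of z^m
  have hpow : ∀ z : ℝ, 0 < z → HasDerivAt (fun w : ℝ => w ^ m) (m * z ^ (m - 1)) z :=
    fun z hz => Real.hasDerivAt_rpow_const (Or.inl hz.ne')
  set G : ℝ → ℝ := fun z => (F (z ^ m) + m * (z ^ m * F1 (z ^ m))) / D ^ ν with hG
  have hgderiv : ∀ z : ℝ, 0 < z →
      HasDerivAt (fun w : ℝ => w * F (w ^ m) / D ^ ν) (G z) z := by
    intro z hz
    have h1 : HasDerivAt (fun w : ℝ => F (w ^ m)) (F1 (z ^ m) * (m * z ^ (m - 1))) z :=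
      by have := (hFd (z ^ m)).comp z (hpow z hz); exact this
    have h2 : HasDerivAt (fun w : ℝ => w * F (w ^ m) / D ^ ν)
        ((1 * F (z ^ m) + id z * (F1 (z ^ m) * (m * z ^ (m - 1)))) / D ^ ν) z :=
      ((hasDerivAt_id z).mul h1).div_const (D ^ ν)
    convert h2 using 1
    have hzz : z ^ (m - 1) * z = z ^ m := by
      rw [← Real.rpow_add_one hz.ne' (m - 1), show m - 1 + 1 = m by ring]
    simp only [hG, id_eq]
    congr 1
    linear_combination (-(m * F1 (z ^ m))) * hzz
  -- pass to G via locality of deriv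
  have hmem : Set.Ioi (0:ℝ) ∈ 𝓝 x := isOpen_Ioi.mem_nhds hx
  have e1 : (fun z : ℝ => z ^ ((1:ℝ)/2) * besselJ ν (z ^ (β + 1) / ((β + 1) * Real.sqrt lam)))
      =ᶠ[𝓝 x] fun z => z * F (z ^ m) / D ^ ν := eventuallyEq_of_mem hmem hEq
  have e3 : deriv (fun z : ℝ => z * F (z ^ m) / D ^ ν) =ᶠ[𝓝 x] G :=
    eventuallyEq_of_mem hmem fun z hz => (hgderiv z hz).deriv
  have e4 : deriv (deriv (fun z : ℝ =>
      z ^ ((1:ℝ)/2) * besselJ ν (z ^ (β + 1) / ((β + 1) * Real.sqrt lam)))) x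
      = deriv G x := (e1.deriv.trans e3).deriv_eq
  -- compute deriv G x
  have h1 : HasDerivAt (fun w : ℝ => F (w ^ m)) (F1 (x ^ m) * (m * x ^ (m - 1))) x :=
    by have := (hFd (x ^ m)).comp x (hpow x hx); exact this
  have h2 : HasDerivAt (fun w : ℝ => F1 (w ^ m)) (F2 (x ^ m) * (m * x ^ (m - 1))) x :=
    by have := (hF1d (x ^ m)).comp x (hpow x hx); exact this
  have h3 : HasDerivAt (fun w : ℝ => w ^ m * F1 (w ^ m))
      (m * x ^ (m - 1) * F1 (x ^ m) + x ^ m * (F2 (x ^ m) * (m * x ^ (m - 1)))) x :=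
    (hpow x hx).mul h2
  have hGd : HasDerivAt G ((F1 (x ^ m) * (m * x ^ (m - 1)) +
      m * (m * x ^ (m - 1) * F1 (x ^ m) + x ^ m * (F2 (x ^ m) * (m * x ^ (m - 1))))) / D ^ ν) x :=
    (h1.add (h3.const_mul m)).div_const (D ^ ν)
  rw [e4, hGd.deriv, hEq x hx]
  -- summabilities
  set u : ℝ := x ^ m with hu
  have hS0 : Summable (fun k : ℕ => b k * u ^ k) := auxSummable b |r| (abs_nonneg r) hMb u
  have hS1 : Summable (fun k : ℕ => b1 k * u ^ k) := auxSummable b1 |r| (abs_nonneg r) hMb1 u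
  have hMb2 : ∀ k : ℕ, ((k : ℝ) + 1) * |b2 (k + 1)| ≤ |r| * |b2 k| := by
    intro k
    have h := hMb1 (k + 1)
    push_cast at h
    simp only [hb2]
    push_cast
    rw [show |((k:ℝ) + 1 + 1) * b1 (k + 1 + 1)| = ((k:ℝ) + 1 + 1) * |b1 (k + 1 + 1)| by
        rw [abs_mul, abs_of_nonneg (by positivity : (0:ℝ) ≤ (k:ℝ) + 1 + 1)],
      show |((k:ℝ) + 1) * b1 (k + 1)| = ((k:ℝ) + 1) * |b1 (k + 1)| by
        rw [abs_mul, abs_of_nonneg (by positivity : (0:ℝ) ≤ (k:ℝ) + 1)]]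
    nlinarith [abs_nonneg (b1 (k + 1 + 1)), abs_nonneg (b1 (k + 1)), Nat.cast_nonneg (α := ℝ) k,
      abs_nonneg r]
  have hS2 : Summable (fun k : ℕ => b2 k * u ^ k) := auxSummable b2 |r| (abs_nonneg r) hMb2 u
  have hSk : Summable (fun k : ℕ => (k : ℝ) * b1 k * u ^ k) := by
    rw [← summable_nat_add_iff 1]
    exact (hS2.mul_right u).congr (fun k => by push_cast [pow_succ, hb2]; ring)
  have hshift : (∑' k : ℕ, (k : ℝ) * b1 k * u ^ k) = u * F2 u := by
    rw [Summable.tsum_eq_zero_add hSk]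
    simp only [Nat.cast_zero, zero_mul, zero_add]
    rw [show (fun k : ℕ => ((k + 1 : ℕ) : ℝ) * b1 (k + 1) * u ^ (k + 1))
        = fun k : ℕ => u * (b2 k * u ^ k) from funext fun k => by
          push_cast [pow_succ, hb2]; ring]
    rw [tsum_mul_left]
  -- coefficient identity
  have hm0 : m ≠ 0 := by rw [hm]; positivity
  have hmν : m * ν = 1 := by rw [hν]; field_simp
  have hrm : lam * (m * m) * r = -1 := by
    rw [hr, hm]
    have h2 : (β + 1) ≠ 0 := hβ1.ne'
    have h3 : lam ≠ 0 := hlam.ne'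
    field_simp
    ring
  have coef : ∀ k : ℕ, lam * (m * (m + 1)) * b1 k + lam * (m * m) * ((k : ℝ) * b1 k) + b k = 0 := by
    intro k
    have hP : (ν + (k:ℝ) + 1) ≠ 0 := by positivity
    have hb1k' : b1 k * (ν + (k:ℝ) + 1) = r * b k := by
      simp only [hb1]
      rw [hbk1 k]
      have h2 : ((k:ℝ) + 1) ≠ 0 := by positivity
      field_simp
    have key2 : (lam * (m * (m + 1)) * b1 k + lam * (m * m) * ((k : ℝ) * b1 k) + b k)
        * (ν + (k:ℝ) + 1) = 0 := by
      linear_combination (lam * m * (m + 1) + lam * m * m * (k:ℝ)) * hb1k'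
        - lam * m * r * (b k) * hmν + (b k) * (ν + (k:ℝ) + 1) * hrm
    exact (mul_eq_zero.mp key2).resolve_right hP
  have KEY : lam * (m * (m + 1)) * F1 u + lam * (m * m) * (u * F2 u) + F u = 0 := by
    have e0 : F u = ∑' k : ℕ, b k * u ^ k := rfl
    have e1 : F1 u = ∑' k : ℕ, b1 k * u ^ k := rfl
    rw [← hshift, e0, e1, ← tsum_mul_left, ← tsum_mul_left,
      ← Summable.tsum_add (hS1.mul_left (lam * (m * (m + 1)))) (hSk.mul_left (lam * (m * m))),
      ← Summable.tsum_add ((hS1.mul_left (lam * (m * (m + 1)))).add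
        (hSk.mul_left (lam * (m * m)))) hS0]
    have : ∀ k : ℕ, lam * (m * (m + 1)) * (b1 k * u ^ k)
        + lam * (m * m) * ((k : ℝ) * b1 k * u ^ k) + b k * u ^ k = 0 := fun k => by
      linear_combination (u ^ k) * coef k
    calc (∑' k : ℕ, (lam * (m * (m + 1)) * (b1 k * u ^ k)
          + lam * (m * m) * ((k : ℝ) * b1 k * u ^ k) + b k * u ^ k))
        = ∑' _ : ℕ, (0:ℝ) := tsum_congr this
      _ = 0 := tsum_zero
  -- final algebra
  have hx1 : x ^ (2 * β) * x = x ^ (m - 1) := by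
    rw [← Real.rpow_add_one hx.ne' (2 * β), show 2 * β + 1 = m - 1 by rw [hm]; ring]
  linear_combination (x ^ (m - 1) / D ^ ν) * KEY + (F u / D ^ ν) * hx1
end

section
/- If λ = (λ_k) and μ = (μ_k) are nonincreasing summable sequences of nonnegative reals such that Π_{k=1}^∞ (1 - 2zλ_k)^{-1/2} = Π_{k=1}^∞ (1 - 2zμ_k)^{-1/2} for all real z < 0, then λ_k = μ_k for all k. -/
open Real Filter

lemma sumlog' {f : ℕ → ℝ} (hf : ∀ k, 0 ≤ f k) (hsum : Summable f) {t : ℝ} (ht : 0 < t) :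
    Summable (fun k => Real.log (1 + t * f k)) := by
  apply Summable.of_nonneg_of_le (fun k => Real.log_nonneg (by nlinarith [hf k]))
    (fun k => ?_) (hsum.mul_left t)
  calc Real.log (1 + t * f k) ≤ (1 + t * f k) - 1 := by
        have := Real.add_one_le_exp (Real.log (1 + t * f k))
        have h1 : (0:ℝ) < 1 + t * f k := by nlinarith [hf k]
        rw [Real.exp_log h1] at this; linarith
    _ = t * f k := by ring

lemma sumpow' {f : ℕ → ℝ} (hf : ∀ k, 0 ≤ f k) (hmono : Antitone f) (hsum : Summable f) (N : ℕ) :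
    Summable (fun k => f k ^ (N + 1)) := by
  apply Summable.of_nonneg_of_le (fun k => pow_nonneg (hf k) _) (fun k => ?_)
    (hsum.mul_left (f 0 ^ N))
  calc f k ^ (N+1) = f k ^ N * f k := by ring
    _ ≤ f 0 ^ N * f k :=
        mul_le_mul_of_nonneg_right (pow_le_pow_left₀ (hf k) (hmono (Nat.zero_le k)) N) (hf k)

-- Taylor remainder bound for log(1+y)
lemma rem_bound {y : ℝ} (hy0 : 0 ≤ y) (hy : y ≤ 1/2) (n : ℕ) :
    |Real.log (1+y) - ∑ i ∈ Finset.range n, (-1)^i * y^(i+1)/(i+1)| ≤ 2 * y^(n+1) := by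
  have hx : |(-y)| < 1 := by rw [abs_neg, abs_of_nonneg hy0]; linarith
  have h1 := Real.abs_log_sub_add_sum_range_le hx n
  rw [abs_neg, abs_of_nonneg hy0, sub_neg_eq_add] at h1
  have e1 : (∑ i ∈ Finset.range n, (-y)^(i+1)/((i:ℝ)+1))
      = -∑ i ∈ Finset.range n, (-1)^i * y^(i+1)/((i:ℝ)+1) := by
    rw [← Finset.sum_neg_distrib]
    apply Finset.sum_congr rfl; intro i _
    rw [neg_pow, pow_succ]; ring
  rw [e1] at h1
  have e2 : |Real.log (1+y) - ∑ i ∈ Finset.range n, (-1)^i * y^(i+1)/((i:ℝ)+1)|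
      = |(-∑ i ∈ Finset.range n, (-1)^i * y^(i+1)/((i:ℝ)+1)) + Real.log (1+y)| := by
    congr 1; ring
  have hb : y ^ (n+1) / (1 - y) ≤ 2 * y^(n+1) := by
    rw [div_le_iff₀ (by linarith)]
    nlinarith [pow_nonneg hy0 (n+1)]
  calc |Real.log (1+y) - ∑ i ∈ Finset.range n, (-1)^i * y^(i+1)/((i:ℝ)+1)|
      = |(-∑ i ∈ Finset.range n, (-1)^i * y^(i+1)/((i:ℝ)+1)) + Real.log (1+y)| := e2
    _ ≤ y ^ (n+1) / (1 - y) := h1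
    _ ≤ 2 * y^(n+1) := hb

-- pointwise remainder function
noncomputable def Rm (n : ℕ) (y : ℝ) : ℝ :=
  Real.log (1+y) - ∑ i ∈ Finset.range n, (-1)^i * y^(i+1)/(i+1)

lemma Rm_succ (n : ℕ) (y : ℝ) :
    Rm n y = Rm (n+1) y + (-1)^n * y^(n+1)/(n+1) := by
  simp [Rm, Finset.sum_range_succ]; ring

lemma Rm_bound {y : ℝ} (hy0 : 0 ≤ y) (hy : y ≤ 1/2) (n : ℕ) :
    |Rm n y| ≤ 2 * y^(n+1) := rem_bound hy0 hy n

-- main tendsto lemma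
lemma tendG {f : ℕ → ℝ} (hf : ∀ k, 0 ≤ f k) (hfm : Antitone f) (hfs : Summable f) (n : ℕ) :
    Tendsto (fun t : ℝ => ∑' k, Rm n (t * f k) / t^(n+1)) (nhdsWithin 0 (Set.Ioi 0))
      (nhds (((-1:ℝ)^n/(n+1)) * ∑' k, f k ^ (n+1))) := by
  have key : (∑' k, ((-1:ℝ)^n/(n+1)) * f k ^ (n+1)) = ((-1:ℝ)^n/(n+1)) * ∑' k, f k ^ (n+1) :=
    tsum_mul_left
  rw [← key]
  set δ : ℝ := (1/2) / (f 0 + 1) with hδ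
  have hf00 : 0 < f 0 + 1 := by linarith [hf 0]
  have hδpos : 0 < δ := by positivity
  have hev : ∀ᶠ t in nhdsWithin (0:ℝ) (Set.Ioi 0), t ∈ Set.Ioo 0 δ :=
    Ioo_mem_nhdsGT_of_mem ⟨le_refl 0, hδpos⟩
  have hsmall : ∀ t ∈ Set.Ioo (0:ℝ) δ, ∀ k, 0 ≤ t * f k ∧ t * f k ≤ 1/2 := by
    intro t ht k
    constructor
    · exact mul_nonneg ht.1.le (hf k)
    · have h1 : f k ≤ f 0 := hfm (Nat.zero_le k)
      have h2 : t * f k ≤ t * (f 0 + 1) := by nlinarith [ht.1, hf k]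
      have h3 : t * (f 0 + 1) < δ * (f 0 + 1) := by nlinarith [ht.2]
      have h4 : δ * (f 0 + 1) = 1/2 := by rw [hδ]; field_simp
      linarith
  apply tendsto_tsum_of_dominated_convergence
    (bound := fun k => 2 * f k ^ (n+1))
  · exact (sumpow' hf hfm hfs n).mul_left 2
  · -- pointwise tendsto
    intro k
    have hconst : Tendsto (fun t : ℝ => ((-1:ℝ)^n/(n+1)) * f k ^ (n+1))
        (nhdsWithin 0 (Set.Ioi 0)) (nhds (((-1:ℝ)^n/(n+1)) * f k ^ (n+1))) := tendsto_const_nhds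
    have hz : Tendsto (fun t : ℝ => Rm n (t * f k) / t^(n+1) - ((-1:ℝ)^n/(n+1)) * f k ^ (n+1))
        (nhdsWithin 0 (Set.Ioi 0)) (nhds 0) := by
      apply squeeze_zero_norm' (a := fun t : ℝ => 2 * f k ^ (n+2) * t)
      · filter_upwards [hev, self_mem_nhdsWithin] with t ht (htpos : t ∈ Set.Ioi 0)
        obtain ⟨hy0, hy1⟩ := hsmall t ht k
        have htp : (0:ℝ) < t := htpos
        have htn : (0:ℝ) < t^(n+1) := pow_pos htp _
        have e : Rm n (t * f k) / t^(n+1) - ((-1:ℝ)^n/(n+1)) * f k ^ (n+1)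
            = Rm (n+1) (t * f k) / t^(n+1) := by
          rw [Rm_succ]
          field_simp
          ring
        rw [Real.norm_eq_abs, e, abs_div, abs_of_pos htn, div_le_iff₀ htn]
        calc |Rm (n+1) (t * f k)| ≤ 2 * (t * f k)^(n+2) := Rm_bound hy0 hy1 (n+1)
          _ = 2 * f k ^ (n+2) * t * t^(n+1) := by ring
      · have : Tendsto (fun t : ℝ => 2 * f k ^ (n+2) * t) (nhds 0)
            (nhds (2 * f k ^ (n+2) * 0)) := (tendsto_id.const_mul _)
        simpa using this.mono_left nhdsWithin_le_nhds
    have := hz.add hconst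
    simp only [sub_add_cancel] at this
    simpa using this
  · -- domination
    filter_upwards [hev] with t ht
    intro k
    obtain ⟨hy0, hy1⟩ := hsmall t ht k
    have htn : (0:ℝ) < t^(n+1) := pow_pos ht.1 _
    rw [Real.norm_eq_abs, abs_div, abs_of_pos htn, div_le_iff₀ htn]
    calc |Rm n (t * f k)| ≤ 2 * (t * f k)^(n+1) := Rm_bound hy0 hy1 n
      _ = 2 * f k ^ (n+1) * t^(n+1) := by ring

-- tsum algebra: split the remainder sum
lemma Rsum {f : ℕ → ℝ} (hf : ∀ k, 0 ≤ f k) (hfm : Antitone f) (hfs : Summable f)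
    {t : ℝ} (ht : 0 < t) (n : ℕ) :
    (∑' k, Rm n (t * f k)) = (∑' k, Real.log (1 + t * f k))
      - ∑ i ∈ Finset.range n, ((-1:ℝ)^i * t^(i+1)/(i+1)) * ∑' k, f k ^ (i+1) := by
  have hsum_i : ∀ i ∈ Finset.range n,
      Summable (fun k => ((-1:ℝ)^i * t^(i+1)/((i:ℝ)+1)) * f k ^ (i+1)) :=
    fun i _ => (sumpow' hf hfm hfs i).mul_left _
  have hS : Summable (fun k => ∑ i ∈ Finset.range n,
      ((-1:ℝ)^i * t^(i+1)/((i:ℝ)+1)) * f k ^ (i+1)) := by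
    exact summable_sum hsum_i
  have hptw : ∀ k, Rm n (t * f k) = Real.log (1 + t * f k)
      - ∑ i ∈ Finset.range n, ((-1:ℝ)^i * t^(i+1)/((i:ℝ)+1)) * f k ^ (i+1) := by
    intro k
    unfold Rm
    congr 1
    apply Finset.sum_congr rfl
    intro i _
    rw [mul_pow]
    ring
  calc (∑' k, Rm n (t * f k))
      = ∑' k, (Real.log (1 + t * f k)
        - ∑ i ∈ Finset.range n, ((-1:ℝ)^i * t^(i+1)/((i:ℝ)+1)) * f k ^ (i+1)) :=
        tsum_congr hptw
    _ = (∑' k, Real.log (1 + t * f k))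
        - ∑' k, ∑ i ∈ Finset.range n, ((-1:ℝ)^i * t^(i+1)/((i:ℝ)+1)) * f k ^ (i+1) :=
        Summable.tsum_sub (sumlog' hf hfs ht) hS
    _ = (∑' k, Real.log (1 + t * f k))
        - ∑ i ∈ Finset.range n, ∑' k, ((-1:ℝ)^i * t^(i+1)/((i:ℝ)+1)) * f k ^ (i+1) := by
        rw [Summable.tsum_finsetSum hsum_i]
    _ = (∑' k, Real.log (1 + t * f k))
        - ∑ i ∈ Finset.range n, ((-1:ℝ)^i * t^(i+1)/((i:ℝ)+1)) * ∑' k, f k ^ (i+1) := by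
        congr 1
        exact Finset.sum_congr rfl (fun i _ => tsum_mul_left)

-- Step 2: power sums are equal
lemma step2 {f g : ℕ → ℝ} (hf : ∀ k, 0 ≤ f k) (hg : ∀ k, 0 ≤ g k)
    (hfm : Antitone f) (hgm : Antitone g) (hfs : Summable f) (hgs : Summable g)
    (hlog : ∀ t : ℝ, 0 < t →
      (∑' k, Real.log (1 + t * f k)) = ∑' k, Real.log (1 + t * g k)) :
    ∀ N : ℕ, (∑' k, f k ^ (N+1)) = ∑' k, g k ^ (N+1) := by
  intro N
  induction N using Nat.strong_induction_on with
  | _ N IH =>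
    have heqG : ∀ᶠ t in nhdsWithin (0:ℝ) (Set.Ioi 0),
        (∑' k, Rm N (t * f k) / t^(N+1)) = ∑' k, Rm N (t * g k) / t^(N+1) := by
      filter_upwards [self_mem_nhdsWithin] with t (ht : t ∈ Set.Ioi 0)
      have ht0 : (0:ℝ) < t := ht
      rw [tsum_div_const, tsum_div_const, Rsum hf hfm hfs ht0 N, Rsum hg hgm hgs ht0 N,
        hlog t ht0]
      congr 2
      apply Finset.sum_congr rfl
      intro i hi
      rw [IH i (Finset.mem_range.mp hi)]
    have h1 := tendG hf hfm hfs N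
    have h2 := (tendG hg hgm hgs N).congr' (heqG.mono fun t h => h.symm)
    have := tendsto_nhds_unique h1 h2
    have hc : ((-1:ℝ)^N/((N:ℝ)+1)) ≠ 0 := by
      apply div_ne_zero
      · exact pow_ne_zero _ (by norm_num)
      · positivity
    exact mul_left_cancel₀ hc this

-- Step 0: product equality gives log-sum equality
lemma step0 {f g : ℕ → ℝ} (hf : ∀ k, 0 ≤ f k) (hg : ∀ k, 0 ≤ g k)
    (hfs : Summable f) (hgs : Summable g)
    (heq : ∀ z : ℝ, z < 0 →
      (∏' k : ℕ, (1 - 2 * z * f k) ^ (-(1:ℝ)/2))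
        = ∏' k : ℕ, (1 - 2 * z * g k) ^ (-(1:ℝ)/2)) :
    ∀ t : ℝ, 0 < t → (∑' k, Real.log (1 + t * f k)) = ∑' k, Real.log (1 + t * g k) := by
  intro t ht
  have key : ∀ (f : ℕ → ℝ), (∀ k, 0 ≤ f k) → Summable f →
      (∏' k : ℕ, (1 - 2 * (-(t/2)) * f k) ^ (-(1:ℝ)/2))
        = Real.exp ((-(1:ℝ)/2) * ∑' k, Real.log (1 + t * f k)) := by
    intro f hf hfs
    have hsl := sumlog' hf hfs ht
    have h1 : HasSum (fun k => (-(1:ℝ)/2) * Real.log (1 + t * f k))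
        ((-(1:ℝ)/2) * ∑' k, Real.log (1 + t * f k)) := (hsl.hasSum).mul_left _
    have h2 := h1.rexp
    rw [← h2.tprod_eq]
    apply tprod_congr
    intro k
    have hpos : (0:ℝ) < 1 + t * f k := by nlinarith [hf k]
    have : 1 - 2 * (-(t/2)) * f k = 1 + t * f k := by ring
    rw [this, Real.rpow_def_of_pos hpos, Function.comp]
    ring_nf
  have := heq (-(t/2)) (by linarith)
  rw [key f hf hfs, key g hg hgs] at this
  have := Real.exp_injective this
  have h2 : (∑' k, Real.log (1 + t * f k)) = ∑' k, Real.log (1 + t * g k) := by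
    field_simp at this; linarith
  exact h2

-- aux for step 3
lemma aux3 {f g : ℕ → ℝ} (hf : ∀ k, 0 ≤ f k) (hg : ∀ k, 0 ≤ g k)
    (hfm : Antitone f) (hgm : Antitone g) (hfs : Summable f) (hgs : Summable g)
    (hpow : ∀ N : ℕ, (∑' k, f k ^ (N+1)) = ∑' k, g k ^ (N+1))
    {k0 : ℕ} (hlt : g k0 < f k0) (hhead : ∀ j < k0, f j = g j) : False := by
  set a := f k0 with ha
  set b := g k0 with hb
  have hb0 : 0 ≤ b := hg k0
  have ha0 : 0 < a := lt_of_le_of_lt hb0 hlt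
  -- tail sums equal
  have tails : ∀ N : ℕ, (∑' k, f (k + k0) ^ (N+1)) = ∑' k, g (k + k0) ^ (N+1) := by
    intro N
    have hfp := sumpow' hf hfm hfs N
    have hgp := sumpow' hg hgm hgs N
    have e1 := Summable.sum_add_tsum_nat_add k0 hfp
    have e2 := Summable.sum_add_tsum_nat_add k0 hgp
    have hh : ∑ i ∈ Finset.range k0, f i ^ (N+1) = ∑ i ∈ Finset.range k0, g i ^ (N+1) := by
      apply Finset.sum_congr rfl; intro i hi; rw [hhead i (Finset.mem_range.mp hi)]
    have := hpow N
    linarith [e1, e2]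
  set C := ∑' k, g (k + k0) with hC
  have hCnn : 0 ≤ C := tsum_nonneg (fun k => hg _)
  have hgtail : Summable (fun k => g (k + k0)) := hgs.comp_injective (add_left_injective k0)
  have key : ∀ N : ℕ, a ^ (N+1) ≤ b ^ N * C := by
    intro N
    have hfp := (sumpow' hf hfm hfs N).comp_injective (add_left_injective k0)
    have h1 : a ^ (N+1) ≤ ∑' k, f (k + k0) ^ (N+1) := by
      have := Summable.le_tsum hfp 0 (fun j _ => pow_nonneg (hf _) _)
      simpa using this
    have h2 : (∑' k, g (k + k0) ^ (N+1)) ≤ b ^ N * C := by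
      rw [hC, ← tsum_mul_left]
      apply Summable.tsum_le_tsum _ (by
        exact (sumpow' hg hgm hgs N).comp_injective (add_left_injective k0)) (hgtail.mul_left _)
      intro k
      calc g (k + k0) ^ (N+1) = g (k + k0) ^ N * g (k + k0) := by ring
        _ ≤ b ^ N * g (k + k0) := by
            apply mul_le_mul_of_nonneg_right _ (hg _)
            exact pow_le_pow_left₀ (hg _) (hgm (Nat.le_add_left k0 k)) N
    calc a ^ (N+1) ≤ ∑' k, f (k + k0) ^ (N+1) := h1
      _ = ∑' k, g (k + k0) ^ (N+1) := tails N
      _ ≤ b ^ N * C := h2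
  rcases eq_or_lt_of_le hb0 with hbz | hbpos
  · have := key 1
    simp [← hbz] at this
    nlinarith
  · -- b > 0, a/b > 1
    have hab : 1 < a / b := (one_lt_div hbpos).mpr hlt
    obtain ⟨N, hN⟩ := pow_unbounded_of_one_lt (C / a) hab
    rw [div_pow, div_lt_div_iff₀ (by positivity) (by positivity)] at hN
    -- hN : C * b ^ N < a ^ N * a
    have h6 := key N
    rw [pow_succ] at h6
    linarith


theorem stmt_18 (l m : ℕ → ℝ)
    (hlpos : ∀ k, 0 ≤ l k) (hmpos : ∀ k, 0 ≤ m k)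
    (hlmono : Antitone l) (hmmono : Antitone m)
    (hlsum : Summable l) (hmsum : Summable m)
    (heq : ∀ z : ℝ, z < 0 →
      (∏' k : ℕ, (1 - 2 * z * l k) ^ (-(1:ℝ)/2))
        = ∏' k : ℕ, (1 - 2 * z * m k) ^ (-(1:ℝ)/2)) :
    ∀ k, l k = m k := by
  have hlog := step0 hlpos hmpos hlsum hmsum heq
  have hpow := step2 hlpos hmpos hlmono hmmono hlsum hmsum hlog
  intro k
  induction k using Nat.strong_induction_on with
  | _ k IH =>
    by_contra hne
    rcases lt_or_gt_of_ne hne with h | h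
    · exact aux3 hmpos hlpos hmmono hlmono hmsum hlsum (fun N => (hpow N).symm) h
        (fun j hj => (IH j hj).symm)
    · exact aux3 hlpos hmpos hlmono hmmono hlsum hmsum hpow h (fun j hj => IH j hj)
end
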